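/- arXiv:2011.05631 — 4 statements merged into one kernel-verified Lean document; each statement's English description precedes it below -/
import Mathlib

section
/- Under the Bakhvalov-type mesh xᵢ = -(τ/(pμ₀))·ln(1 - ξ·i/N) with ξ = 4(1 - μ₀⁻¹), N ≥ 16, μ₀⁻¹ ≤ N⁻¹, τ ≥ 1, 0 < p < 1, the mesh size h_{N/4−2} = x_{N/4−1} − x_{N/4−2} satisfies (τ/(4p))·μ₀⁻¹ ≤ h_{N/4−2} ≤ (τ/p)·μ₀⁻¹. -/
/-!
With `q = μ₀⁻¹` and `N = 4M`, the mesh generating function is `t i = 1 - ξ i / N`, which is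
affine in `i` with `t M = q`; hence `t (M - k) = (q M + k (1 - q)) / M` and
`h_{M-2} = (τ / (p μ₀)) · log ((r + 2s) / (r + s))` with `r = q M ≤ 1/4`, `s = 1 - q`.
Since `r ≤ 2s`, the ratio lies in `[4/3, 2]`, and `1 - 1/y ≤ log y ≤ y - 1` puts its logarithm
in `[1/4, 1]`.
-/

open Real Set

lemma sub_eq_mul_log_div {C ξ N : ℝ} {x : ℕ → ℝ} {i j : ℕ}
    (hxi : x i = -C * log (1 - ξ * i / N)) (hxj : x j = -C * log (1 - ξ * j / N))
    (hi : 1 - ξ * i / N ≠ 0) (hj : 1 - ξ * j / N ≠ 0) :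
    x j - x i = C * log ((1 - ξ * i / N) / (1 - ξ * j / N)) := by
  rw [hxi, hxj, log_div hi hj]
  ring

lemma add_two_mul_div_add_mem_Icc {r s : ℝ} (hr : 0 ≤ r) (hrs : r ≤ 2 * s) (hs : 0 < s) :
    (r + 2 * s) / (r + s) ∈ Icc (4 / 3 : ℝ) 2 := by
  have hpos : 0 < r + s := by linarith
  constructor
  · rw [le_div_iff₀ hpos]; linarith
  · rw [div_le_iff₀ hpos]; linarith

lemma log_mem_Icc_quarter_one {y : ℝ} (hy : y ∈ Icc (4 / 3 : ℝ) 2) :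
    log y ∈ Icc (1 / 4 : ℝ) 1 := by
  have hy0 : 0 < y := by linarith [hy.1]
  constructor
  · have hinv : y⁻¹ ≤ 3 / 4 := by
      rw [inv_le_comm₀ hy0 (by norm_num)]; linarith [hy.1]
    linarith [one_sub_inv_le_log_of_pos hy0]
  · linarith [log_le_sub_one_of_pos hy0, hy.2]

section BakhvalovMesh

variable {q M : ℝ}

lemma one_sub_mul_div_eq (hM : M ≠ 0) (k : ℝ) :
    1 - 4 * (1 - q) * (M - k) / (4 * M) = (q * M + k * (1 - q)) / M := by
  field_simp
  ring

lemma one_sub_mul_div_pos (hq : 0 < q) (hq1 : q ≤ 1) (hM : 0 < M) {k : ℝ} (hk : 0 < k) :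
    0 < 1 - 4 * (1 - q) * (M - k) / (4 * M) := by
  rw [one_sub_mul_div_eq hM.ne' k]
  have : 0 ≤ k * (1 - q) := mul_nonneg hk.le (by linarith)
  positivity

lemma log_div_one_sub_mul_div_mem_Icc (hq : 0 < q) (hqM : q * (4 * M) ≤ 1) (hM : 4 ≤ M) :
    log ((1 - 4 * (1 - q) * (M - 2) / (4 * M)) / (1 - 4 * (1 - q) * (M - 1) / (4 * M))) ∈
      Icc (1 / 4 : ℝ) 1 := by
  have hM0 : M ≠ 0 := by positivity
  have hq1 : q ≤ 1 / 16 := by nlinarith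
  rw [one_sub_mul_div_eq hM0, one_sub_mul_div_eq hM0, div_div_div_cancel_right₀ hM0, one_mul]
  exact log_mem_Icc_quarter_one <|
    add_two_mul_div_add_mem_Icc (by positivity) (by linarith) (by linarith)

end BakhvalovMesh

theorem stmt_8_general (N : ℕ) (hN : 16 ≤ N) (hdvd : 4 ∣ N)
    (μ₀ τ p : ℝ) (hμ₀ : 0 < μ₀) (hμ : μ₀⁻¹ ≤ (N : ℝ)⁻¹) (hτ : 1 ≤ τ)
    (hp : 0 < p)
    (x : ℕ → ℝ)
    (hx : ∀ i : ℕ, i ≤ N / 4 →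
      x i = -(τ / (p * μ₀)) * Real.log (1 - 4 * (1 - μ₀⁻¹) * (i : ℝ) / (N : ℝ))) :
    τ / (4 * p) * μ₀⁻¹ ≤ x (N / 4 - 1) - x (N / 4 - 2) ∧
    x (N / 4 - 1) - x (N / 4 - 2) ≤ τ / p * μ₀⁻¹ := by
  obtain ⟨M, rfl⟩ := hdvd
  have hM : (4 : ℝ) ≤ M := by exact_mod_cast (show 4 ≤ M by omega)
  rw [Nat.mul_div_cancel_left M four_pos] at hx ⊢
  have hq : 0 < μ₀⁻¹ := inv_pos.mpr hμ₀
  have hqM : μ₀⁻¹ * (4 * M) ≤ 1 := by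
    push_cast at hμ
    rwa [← le_div_iff₀ (by positivity), one_div]
  have hq1 : μ₀⁻¹ ≤ 1 := by nlinarith
  have hcast : ∀ k ≤ M, ((M - k : ℕ) : ℝ) = M - k := fun k hk => by push_cast [hk]; ring
  have hmesh := sub_eq_mul_log_div (hx (M - 2) (by omega)) (hx (M - 1) (by omega))
  push_cast [hcast 2 (by omega), hcast 1 (by omega)] at hmesh
  rw [hmesh (one_sub_mul_div_pos hq hq1 (by positivity) two_pos).ne'
    (one_sub_mul_div_pos hq hq1 (by positivity) one_pos).ne']
  obtain ⟨hlow, hupp⟩ := log_div_one_sub_mul_div_mem_Icc hq hqM hM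
  have hC : 0 ≤ τ / (p * μ₀) := by positivity
  constructor
  · calc τ / (4 * p) * μ₀⁻¹ = τ / (p * μ₀) * (1 / 4) := by field_simp
      _ ≤ _ := mul_le_mul_of_nonneg_left hlow hC
  · calc _ ≤ τ / (p * μ₀) * 1 := mul_le_mul_of_nonneg_left hupp hC
      _ = τ / p * μ₀⁻¹ := by field_simp

theorem stmt_8 (N : ℕ) (hN : 16 ≤ N) (hdvd : 4 ∣ N)
    (μ₀ τ p : ℝ) (hμ₀ : 0 < μ₀) (hμ : μ₀⁻¹ ≤ (N : ℝ)⁻¹) (hτ : 1 ≤ τ)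
    (hp : 0 < p) (hp1 : p < 1)
    (x : ℕ → ℝ)
    (hx : ∀ i : ℕ, i ≤ N / 4 →
      x i = -(τ / (p * μ₀)) * Real.log (1 - 4 * (1 - μ₀⁻¹) * (i : ℝ) / (N : ℝ))) :
    τ / (4 * p) * μ₀⁻¹ ≤ x (N / 4 - 1) - x (N / 4 - 2) ∧
    x (N / 4 - 1) - x (N / 4 - 2) ≤ τ / p * μ₀⁻¹ :=
  stmt_8_general N hN hdvd μ₀ τ p hμ₀ hμ hτ hp x hx
end

section
/- Under the Bakhvalov-type mesh xᵢ = -(τ/(pμ₀))·ln(1 − ξ·i/N) with ξ = 4(1 − μ₀⁻¹), μ₀⁻¹ ≤ N⁻¹, τ ≥ 1, 0 < p < 1, the last layer mesh size h_{N/4−1} = x_{N/4} − x_{N/4−1} satisfies (τ/(2p))·μ₀⁻¹ ≤ h_{N/4−1} ≤ (4τ/p)·N⁻¹. -/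
/-!
With `N = 4k`, the mesh arguments at `k` and `k - 1` are `μ₀⁻¹` and `μ₀⁻¹ (1 + (μ₀ - 1) / k)`, so
the last layer step is `τ / (p μ₀) · log (1 + t)` with `t = (μ₀ - 1) / k`. Since `μ₀ ≥ N = 4k` we have
`t ≥ 1`, and `log 2 ≤ log (1 + t) ≤ t` gives both bounds.
-/

open Real

lemma Real.half_lt_log_one_add {t : ℝ} (ht : 1 ≤ t) : 1 / 2 < log (1 + t) :=
  calc (1 / 2 : ℝ) < log 2 := log_two_gt_d9.trans_le' (by norm_num)
    _ ≤ log (1 + t) := log_le_log two_pos (by linarith)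

lemma bakhvalov_last_step {x : ℕ → ℝ} {c μ : ℝ} {k : ℕ} (hk : k ≠ 0) (hμ : 1 ≤ μ)
    (hx : ∀ i ≤ k, x i = -c * log (1 - 4 * (1 - μ⁻¹) * i / (4 * k))) :
    x k - x (k - 1) = c * log (1 + (μ - 1) / k) := by
  have harg_k : 1 - 4 * (1 - μ⁻¹) * k / (4 * k) = μ⁻¹ := by
    field_simp; ring
  have harg_pred :
      1 - 4 * (1 - μ⁻¹) * ((k - 1 : ℕ) : ℝ) / (4 * k) = μ⁻¹ * (1 + (μ - 1) / k) := by
    rw [Nat.cast_pred (Nat.pos_of_ne_zero hk)]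
    field_simp; ring
  have hpos : 0 < 1 + (μ - 1) / k := add_pos_of_pos_of_nonneg one_pos (by bound)
  rw [hx k le_rfl, hx (k - 1) (Nat.sub_le k 1), harg_k, harg_pred,
    log_mul (by positivity) hpos.ne']
  ring

theorem stmt_9_general (N : ℕ) (hdvd : 4 ∣ N)
    (μ₀ τ p : ℝ) (hμ₀ : 0 < μ₀) (hμ : μ₀⁻¹ ≤ (N : ℝ)⁻¹) (hτ : 1 ≤ τ)
    (hp : 0 < p)
    (x : ℕ → ℝ)
    (hx : ∀ i : ℕ, i ≤ N / 4 →
      x i = -(τ / (p * μ₀)) * Real.log (1 - 4 * (1 - μ₀⁻¹) * (i : ℝ) / (N : ℝ))) :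
    τ / (2 * p) * μ₀⁻¹ ≤ x (N / 4) - x (N / 4 - 1) ∧
    x (N / 4) - x (N / 4 - 1) ≤ 4 * τ / p * (N : ℝ)⁻¹ := by
  obtain ⟨k, rfl⟩ := hdvd
  -- `N = 0` is excluded only through the junk value `(0 : ℝ)⁻¹ = 0` in `hμ`.
  have hk : k ≠ 0 := by
    rintro rfl
    simp only [mul_zero, CharP.cast_eq_zero, inv_zero] at hμ
    exact (inv_pos.2 hμ₀).not_ge hμ
  have hk1 : (1 : ℝ) ≤ k := by exact_mod_cast Nat.one_le_iff_ne_zero.2 hk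
  have hkμ : 4 * (k : ℝ) ≤ μ₀ := by
    exact_mod_cast (inv_le_inv₀ hμ₀ (by positivity)).1 hμ
  rw [Nat.mul_div_cancel_left k four_pos,
    bakhvalov_last_step (μ := μ₀) hk (by linarith) fun i hi => by simpa using hx i (by omega)]
  set t := (μ₀ - 1) / k with ht
  have ht1 : 1 ≤ t := by rw [ht, le_div_iff₀ (by positivity)]; linarith
  push_cast
  constructor
  · calc τ / (2 * p) * μ₀⁻¹ = τ / (p * μ₀) * (1 / 2) := by field_simp
      _ ≤ τ / (p * μ₀) * log (1 + t) := by gcongr; exact (half_lt_log_one_add ht1).le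
  · calc τ / (p * μ₀) * log (1 + t) ≤ τ / (p * μ₀) * t := by
          gcongr; linarith [log_le_sub_one_of_pos (by linarith : 0 < 1 + t)]
      _ = 4 * τ / p * (4 * (k : ℝ))⁻¹ * ((μ₀ - 1) / μ₀) := by rw [ht]; field_simp
      _ ≤ 4 * τ / p * (4 * (k : ℝ))⁻¹ := by
          apply mul_le_of_le_one_right (by positivity)
          rw [div_le_one hμ₀]; linarith

theorem stmt_9 (N : ℕ) (hN : 16 ≤ N) (hdvd : 4 ∣ N)
    (μ₀ τ p : ℝ) (hμ₀ : 0 < μ₀) (hμ : μ₀⁻¹ ≤ (N : ℝ)⁻¹) (hτ : 1 ≤ τ)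
    (hp : 0 < p) (hp1 : p < 1)
    (x : ℕ → ℝ)
    (hx : ∀ i : ℕ, i ≤ N / 4 →
      x i = -(τ / (p * μ₀)) * Real.log (1 - 4 * (1 - μ₀⁻¹) * (i : ℝ) / (N : ℝ))) :
    τ / (2 * p) * μ₀⁻¹ ≤ x (N / 4) - x (N / 4 - 1) ∧
    x (N / 4) - x (N / 4 - 1) ≤ 4 * τ / p * (N : ℝ)⁻¹ :=
  stmt_9_general N hdvd μ₀ τ p hμ₀ hμ hτ hp x hx
end

section
/- Let xᵢ = -(τ/(pμ₀))·ln(1 − ξ·i/N) with ξ = 4(1 − μ₀⁻¹), μ₀⁻¹ ≤ N⁻¹, τ ≥ 1, 0 < p < 1, N ≥ 16. Then for every real m with 0 ≤ m ≤ τ and every i = 0, 1, …, N/4 − 2, hᵢ^m · e^{−pμ₀xᵢ} ≤ C·μ₀^{−m}·N^{−m} for a constant C depending only on τ and p. -/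
/-!
Put `tⱼ = 1 - ξ j / N`, so that `xⱼ = -(τ / (p μ₀)) log tⱼ` and `e^{-p μ₀ xᵢ} = tᵢ^τ`.
Since `ξ (i + 2) ≤ N`, the next node satisfies `tᵢ₊₁ ≥ ξ / N = tᵢ - tᵢ₊₁`, i.e. `tᵢ ≤ 2 tᵢ₊₁`,
and `log x ≤ x - 1` gives `hᵢ tᵢ ≤ 2 (τ / (p μ₀)) ξ / N ≤ 8 τ / (p μ₀ N)`.
Writing `hᵢ^m tᵢ^τ ≤ (hᵢ tᵢ)^m` (as `tᵢ ≤ 1` and `m ≤ τ`) finishes the proof.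
-/

open Real

lemma log_sub_log_mul_le_two_mul_sub {s t : ℝ} (hs : 0 < s) (hst : s ≤ t) (ht : t ≤ 2 * s) :
    (log t - log s) * t ≤ 2 * (t - s) := by
  have hlog : log t - log s ≤ (t - s) / s := by
    rw [← log_div (hs.trans_le hst).ne' hs.ne', sub_div, div_self hs.ne']
    exact log_le_sub_one_of_pos (div_pos (hs.trans_le hst) hs)
  calc (log t - log s) * t ≤ (t - s) / s * (2 * s) :=
        mul_le_mul hlog ht (hs.le.trans hst) (div_nonneg (sub_nonneg.2 hst) hs.le)
    _ = 2 * (t - s) := by field_simp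

lemma exp_neg_mul_neg_div_mul_log {c τ t : ℝ} (hc : c ≠ 0) (ht : 0 < t) :
    exp (-c * (-(τ / c) * log t)) = t ^ τ := by
  rw [rpow_def_of_pos ht]
  congr 1
  field_simp

lemma rpow_mul_rpow_le_of_mul_le {h t K m τ : ℝ} (hh : 0 ≤ h) (ht₀ : 0 ≤ t) (ht₁ : t ≤ 1)
    (hm : 0 ≤ m) (hmτ : m ≤ τ) (hK : h * t ≤ K) : h ^ m * t ^ τ ≤ K ^ m :=
  calc h ^ m * t ^ τ ≤ h ^ m * t ^ m :=
        mul_le_mul_of_nonneg_left (rpow_le_rpow_of_exponent_ge' ht₀ ht₁ hm hmτ) (by positivity)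
    _ = (h * t) ^ m := (mul_rpow hh ht₀).symm
    _ ≤ K ^ m := rpow_le_rpow (mul_nonneg hh ht₀) hK hm

lemma rpow_le_max_one_rpow {B m τ : ℝ} (hB : 0 ≤ B) (hm : 0 ≤ m) (hmτ : m ≤ τ) :
    B ^ m ≤ max 1 B ^ τ :=
  (rpow_le_rpow hB (le_max_right 1 B) hm).trans
    (rpow_le_rpow_of_exponent_le (le_max_left 1 B) hmτ)

lemma div_mul_rpow_le {B u v m τ : ℝ} (hB : 0 ≤ B) (hu : 0 < u) (hv : 0 < v) (hm : 0 ≤ m)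
    (hmτ : m ≤ τ) : (B / (u * v)) ^ m ≤ max 1 B ^ τ * u ^ (-m) * v ^ (-m) := by
  rw [div_rpow hB (mul_pos hu hv).le, mul_rpow hu.le hv.le, rpow_neg hu.le, rpow_neg hv.le,
    mul_assoc, ← mul_inv, ← div_eq_mul_inv]
  exact div_le_div_of_nonneg_right (rpow_le_max_one_rpow hB hm hmτ) (by positivity)

lemma one_sub_mul_div_bounds {ξ N s : ℝ} (hξ₀ : 0 ≤ ξ) (hξ₄ : ξ ≤ 4) (hs : 0 ≤ s)
    (hN : 4 * (s + 2) ≤ N) :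
    0 < 1 - ξ * (s + 1) / N ∧ 1 - ξ * (s + 1) / N ≤ 1 - ξ * s / N ∧
      1 - ξ * s / N ≤ 2 * (1 - ξ * (s + 1) / N) ∧ 1 - ξ * s / N ≤ 1 := by
  have hN₀ : 0 < N := by linarith
  have hξs : ξ * (s + 2) ≤ N := by nlinarith
  refine ⟨?_, ?_, ?_, ?_⟩
  · rw [sub_pos, div_lt_one hN₀]; nlinarith
  · gcongr; linarith
  · rw [← sub_nonneg]
    have : 2 * (1 - ξ * (s + 1) / N) - (1 - ξ * s / N) = (N - ξ * (s + 2)) / N := by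
      field_simp; ring
    rw [this]; exact div_nonneg (by linarith) hN₀.le
  · have : 0 ≤ ξ * s / N := by positivity
    linarith

theorem stmt_10_general (τ p : ℝ) (hp : 0 < p) :
    ∃ C : ℝ, 0 < C ∧
      ∀ (N : ℕ), 16 ≤ N → 4 ∣ N →
      ∀ μ₀ : ℝ, 0 < μ₀ → μ₀⁻¹ ≤ (N : ℝ)⁻¹ →
      ∀ x : ℕ → ℝ,
        (∀ i : ℕ, i ≤ N / 4 →
          x i = -(τ / (p * μ₀)) * Real.log (1 - 4 * (1 - μ₀⁻¹) * (i : ℝ) / (N : ℝ))) →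
      ∀ m : ℝ, 0 ≤ m → m ≤ τ →
      ∀ i : ℕ, i ≤ N / 4 - 2 →
        (x (i + 1) - x i) ^ m * Real.exp (-(p * μ₀) * x i) ≤
          C * μ₀ ^ (-m) * (N : ℝ) ^ (-m) := by
  refine ⟨max 1 (8 * τ / p) ^ τ, by positivity, ?_⟩
  intro N hN _ μ₀ hμ hμN x hx m hm hmτ i hi
  have hN₀ : (0 : ℝ) < N := by positivity
  have hμ₀ : 0 < μ₀⁻¹ := inv_pos.2 hμ
  have hμ₁ : μ₀⁻¹ ≤ 1 :=
    hμN.trans (inv_le_one_of_one_le₀ (by exact_mod_cast (by omega : 1 ≤ N)))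
  have hiN : 4 * ((i : ℝ) + 2) ≤ N := by exact_mod_cast (by omega : 4 * (i + 2) ≤ N)
  obtain ⟨ht₁, ht₁₀, ht₀₂, ht₀⟩ := one_sub_mul_div_bounds (ξ := 4 * (1 - μ₀⁻¹))
    (by linarith) (by linarith) i.cast_nonneg hiN
  rw [hx i (by omega), hx (i + 1) (by omega), Nat.cast_succ,
    exp_neg_mul_neg_div_mul_log (by positivity) (by linarith), ← mul_sub_left_distrib,
    neg_mul_comm, neg_sub]
  set t₀ : ℝ := 1 - 4 * (1 - μ₀⁻¹) * i / N
  set t₁ : ℝ := 1 - 4 * (1 - μ₀⁻¹) * (i + 1) / N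
  have hτ : 0 ≤ τ := hm.trans hmτ
  have hstep : τ / (p * μ₀) * (log t₀ - log t₁) * t₀ ≤ 8 * τ / p / (μ₀ * N) :=
    calc τ / (p * μ₀) * (log t₀ - log t₁) * t₀ ≤ τ / (p * μ₀) * (2 * (t₀ - t₁)) := by
          rw [mul_assoc]
          exact mul_le_mul_of_nonneg_left (log_sub_log_mul_le_two_mul_sub ht₁ ht₁₀ ht₀₂)
            (by positivity)
      _ = 8 * τ / p / (μ₀ * N) * (1 - μ₀⁻¹) := by simp only [t₀, t₁]; field_simp; ring
      _ ≤ 8 * τ / p / (μ₀ * N) := mul_le_of_le_one_right (by positivity) (by linarith)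
  have hincr : 0 ≤ τ / (p * μ₀) * (log t₀ - log t₁) :=
    mul_nonneg (by positivity) (sub_nonneg.2 (log_le_log ht₁ ht₁₀))
  exact (rpow_mul_rpow_le_of_mul_le hincr (by linarith) ht₀ hm hmτ hstep).trans
    (div_mul_rpow_le (by positivity) hμ hN₀ hm hmτ)

theorem stmt_10 (τ p : ℝ) (hτ : 1 ≤ τ) (hp : 0 < p) (hp1 : p < 1) :
    ∃ C : ℝ, 0 < C ∧
      ∀ (N : ℕ), 16 ≤ N → 4 ∣ N →
      ∀ μ₀ : ℝ, 0 < μ₀ → μ₀⁻¹ ≤ (N : ℝ)⁻¹ →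
      ∀ x : ℕ → ℝ,
        (∀ i : ℕ, i ≤ N / 4 →
          x i = -(τ / (p * μ₀)) * Real.log (1 - 4 * (1 - μ₀⁻¹) * (i : ℝ) / (N : ℝ))) →
      ∀ m : ℝ, 0 ≤ m → m ≤ τ →
      ∀ i : ℕ, i ≤ N / 4 - 2 →
        (x (i + 1) - x i) ^ m * Real.exp (-(p * μ₀) * x i) ≤
          C * μ₀ ^ (-m) * (N : ℝ) ^ (-m) :=
  stmt_10_general τ p hp
end

section
/- Let Tᵢ = (h_{i+1} − hᵢ)·e^{−pμ₀x_{i+1}} for i = 0, 1, …, N/4 − 3, where xᵢ = -(τ/(pμ₀))·ln(1 − ξi/N), ξ = 4(1 − μ₀⁻¹), hᵢ = x_{i+1} − xᵢ, τ ≥ 5/2, 0 < p < 1, μ₀⁻¹ ≤ N⁻¹ and N ≥ 16. Then max over i of Tᵢ ≤ C·μ₀⁻¹·N⁻² for a constant C depending only on τ and p. -/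
open Real

/-!
With `a = τ / (p μ₀)`, `d = ξ / N` and `u = 1 - (i + 1) d`, the mesh points are
`xⱼ = -a log (1 - j d)`, so the second difference is `-a log (1 - (d / u)²)` and the weight
is `exp (-p μ₀ x_{i+1}) = u ^ τ`. Since `i + 3 ≤ N / 4` gives `2 d ≤ u`, we have
`(d / u)² ≤ 1 / 4`, and `-log (1 - t) ≤ 2 t` together with `u ^ τ ≤ u ^ 2` bounds the product
by `2 a d² ≤ 32 τ / (p μ₀ N²)`.
-/

theorem neg_log_one_sub_le_two_mul {t : ℝ} (ht0 : 0 ≤ t) (ht : t ≤ 1 / 2) :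
    -log (1 - t) ≤ 2 * t := by
  have hpos : 0 < 1 - t := by linarith
  calc -log (1 - t) = log (1 - t)⁻¹ := (log_inv _).symm
    _ ≤ (1 - t)⁻¹ - 1 := log_le_sub_one_of_pos (inv_pos.mpr hpos)
    _ = t / (1 - t) := by field_simp; ring
    _ ≤ 2 * t := by rw [div_le_iff₀ hpos]; nlinarith

theorem second_diff_neg_log_mul (a : ℝ) {d u : ℝ} (hd : 0 ≤ d) (hdu : d < u) :
    (-a * log (u - d) - -a * log u) - (-a * log u - -a * log (u + d)) =
      -a * log (1 - (d / u) ^ 2) := by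
  have hu : 0 < u := hd.trans_lt hdu
  have hfactor : 1 - (d / u) ^ 2 = (u - d) * (u + d) / u ^ 2 := by field_simp; ring
  rw [hfactor, log_div (by nlinarith) (by positivity), log_mul (by linarith) (by linarith),
    log_pow]
  push_cast
  ring

theorem second_diff_neg_log_mul_rpow_le {a d u τ : ℝ} (ha : 0 ≤ a) (hd : 0 < d)
    (hdu : 2 * d ≤ u) (hu : u ≤ 1) (hτ : 2 ≤ τ) :
    ((-a * log (u - d) - -a * log u) - (-a * log u - -a * log (u + d))) * u ^ τ ≤
      2 * a * d ^ 2 := by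
  have hu0 : 0 < u := by linarith
  have hratio : (d / u) ^ 2 ≤ 1 / 2 := by
    rw [div_pow, div_le_iff₀ (by positivity)]
    nlinarith
  have hlog : -log (1 - (d / u) ^ 2) ≤ 2 * (d / u) ^ 2 :=
    neg_log_one_sub_le_two_mul (by positivity) hratio
  have hlog0 : 0 ≤ -log (1 - (d / u) ^ 2) := by
    rw [neg_nonneg]
    exact log_nonpos (by linarith) (by linarith [sq_nonneg (d / u)])
  have hpow : u ^ τ ≤ u ^ 2 := by
    simpa using rpow_le_rpow_of_exponent_ge hu0 hu hτ
  rw [second_diff_neg_log_mul a hd.le (by linarith)]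
  calc -a * log (1 - (d / u) ^ 2) * u ^ τ = a * -log (1 - (d / u) ^ 2) * u ^ τ := by ring
    _ ≤ a * (2 * (d / u) ^ 2) * u ^ 2 := by gcongr
    _ = 2 * a * d ^ 2 := by field_simp

theorem second_diff_neg_log_mesh_mul_exp_le {c τ d : ℝ} {i : ℕ} (hc : 0 < c) (hτ : 2 ≤ τ)
    (hd : 0 < d) (hi : ((i : ℝ) + 3) * d ≤ 1) {x : ℕ → ℝ}
    (hx : ∀ j ≤ i + 2, x j = -(τ / c) * log (1 - j * d)) :
    ((x (i + 2) - x (i + 1)) - (x (i + 1) - x i)) * exp (-c * x (i + 1)) ≤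
      2 * (τ / c) * d ^ 2 := by
  set u := 1 - (i + 1) * d with hu_def
  have hx0 : x i = -(τ / c) * log (u + d) := by rw [hx i (by omega), hu_def]; ring_nf
  have hx1 : x (i + 1) = -(τ / c) * log u := by
    rw [hx (i + 1) (by omega), hu_def]; push_cast; ring_nf
  have hx2 : x (i + 2) = -(τ / c) * log (u - d) := by
    rw [hx (i + 2) le_rfl, hu_def]; push_cast; ring_nf
  have hweight : exp (-c * x (i + 1)) = u ^ τ := by
    rw [hx1, rpow_def_of_pos (by nlinarith)]
    field_simp
  rw [hweight, hx0, hx1, hx2]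
  exact second_diff_neg_log_mul_rpow_le (by positivity) hd (by linarith)
    (by nlinarith [Nat.cast_nonneg (α := ℝ) i]) hτ

theorem stmt_11_general (τ p : ℝ) (hτ : τ ≥ 5/2) (hp : 0 < p) :
    ∃ C : ℝ, 0 < C ∧
      ∀ (N : ℕ), 16 ≤ N → 4 ∣ N →
      ∀ μ₀ : ℝ, 0 < μ₀ → μ₀⁻¹ ≤ (N : ℝ)⁻¹ →
      ∀ x : ℕ → ℝ,
        (∀ i : ℕ, i ≤ N / 4 →
          x i = -(τ / (p * μ₀)) * Real.log (1 - 4 * (1 - μ₀⁻¹) * (i : ℝ) / (N : ℝ))) →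
      ∀ i : ℕ, i ≤ N / 4 - 3 →
        ((x (i + 2) - x (i + 1)) - (x (i + 1) - x i)) * Real.exp (-(p * μ₀) * x (i + 1)) ≤
          C * μ₀⁻¹ * ((N : ℝ) ^ 2)⁻¹ := by
  refine ⟨32 * τ / p, by positivity, fun N hN _ μ₀ hμ₀ hμ₀N x hx i hi => ?_⟩
  have hN0 : (0 : ℝ) < N := by positivity
  have hμ₀1 : μ₀⁻¹ < 1 :=
    hμ₀N.trans_lt (inv_lt_one_of_one_lt₀ (by exact_mod_cast (by omega : 1 < N)))
  set d := 4 * (1 - μ₀⁻¹) / N with hd_def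
  have hd0 : 0 < d := by positivity
  have hdN : d ≤ 4 / N := by rw [hd_def]; gcongr; linarith [inv_pos.mpr hμ₀]
  have hi3 : ((i : ℝ) + 3) * d ≤ 1 := by
    have : 4 * ((i : ℝ) + 3) ≤ N := by exact_mod_cast (by omega : 4 * (i + 3) ≤ N)
    calc ((i : ℝ) + 3) * d ≤ (i + 3) * (4 / N) := by gcongr
      _ ≤ 1 := by rw [mul_div_assoc', div_le_one hN0]; linarith
  have hmesh : ∀ j ≤ i + 2, x j = -(τ / (p * μ₀)) * log (1 - j * d) := fun j hj => by
    rw [hx j (by omega), hd_def, mul_div_assoc', mul_comm (j : ℝ)]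
  calc _ ≤ 2 * (τ / (p * μ₀)) * d ^ 2 :=
        second_diff_neg_log_mesh_mul_exp_le (by positivity) (by linarith) hd0 hi3 hmesh
    _ ≤ 2 * (τ / (p * μ₀)) * (4 / N) ^ 2 := by gcongr
    _ = 32 * τ / p * μ₀⁻¹ * ((N : ℝ) ^ 2)⁻¹ := by field_simp; ring

theorem stmt_11 (τ p : ℝ) (hτ : τ ≥ 5/2) (hp : 0 < p) (hp1 : p < 1) :
    ∃ C : ℝ, 0 < C ∧
      ∀ (N : ℕ), 16 ≤ N → 4 ∣ N →
      ∀ μ₀ : ℝ, 0 < μ₀ → μ₀⁻¹ ≤ (N : ℝ)⁻¹ →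
      ∀ x : ℕ → ℝ,
        (∀ i : ℕ, i ≤ N / 4 →
          x i = -(τ / (p * μ₀)) * Real.log (1 - 4 * (1 - μ₀⁻¹) * (i : ℝ) / (N : ℝ))) →
      ∀ i : ℕ, i ≤ N / 4 - 3 →
        ((x (i + 2) - x (i + 1)) - (x (i + 1) - x i)) * Real.exp (-(p * μ₀) * x (i + 1)) ≤
          C * μ₀⁻¹ * ((N : ℝ) ^ 2)⁻¹ :=
  stmt_11_general τ p hτ hp
end
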